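/- Let ψ : (0,∞)³ → ℝ be defined by ψ(η₁,η₂,η₃) = ¼(η₁ ln η₁ + η₂ ln η₂ + η₃ ln η₃). Then the matrix of second partial derivatives of ψ at η is diag(1/(4η₁), 1/(4η₂), 1/(4η₃)), and for all x, y, z > 0, with J(x,y,z) = diag(2x, 2y, 2z) the Jacobian of (x,y,z) ↦ (x², y², z²), one has J(x,y,z)ᵀ · Hess ψ(x², y², z²) · J(x,y,z) equal to the 3×3 identity matrix; i.e. (x², y², z²) are Hessian coordinates for Euclidean 3-space with Hessian potential ψ. (This is the Smorodinski–Winternitz system (I).) -/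

import Mathlib

open Real Set Matrix

/-! ψ is a sum of one-variable functions `t log t / 4`, so its mixed partials vanish and its
Hessian is `diag((t log t / 4)'')`, with `(t log t)'' = 1/t`. Since `J` is diagonal too,
`Jᵀ · Hess ψ(x², y², z²) · J` is diagonal with entries `(2x)² / (4x²) = 1`. -/

/-- The Hessian potential of the Smorodinski–Winternitz system (I)
in its Hessian coordinates. -/
noncomputable def ψ (a b c : ℝ) : ℝ := (a * log a + b * log b + c * log c) / 4

/-- Partial derivative with respect to the first variable. -/
noncomputable def d1 (f : ℝ → ℝ → ℝ → ℝ) (a b c : ℝ) : ℝ := deriv (fun s => f s b c) a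

/-- Partial derivative with respect to the second variable. -/
noncomputable def d2 (f : ℝ → ℝ → ℝ → ℝ) (a b c : ℝ) : ℝ := deriv (fun s => f a s c) b

/-- Partial derivative with respect to the third variable. -/
noncomputable def d3 (f : ℝ → ℝ → ℝ → ℝ) (a b c : ℝ) : ℝ := deriv (fun s => f a b s) c

/-- The matrix of second partial derivatives of a function of three variables. -/
noncomputable def Hess (f : ℝ → ℝ → ℝ → ℝ) (a b c : ℝ) : Matrix (Fin 3) (Fin 3) ℝ :=
  !![d1 (d1 f) a b c, d1 (d2 f) a b c, d1 (d3 f) a b c;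
     d2 (d1 f) a b c, d2 (d2 f) a b c, d2 (d3 f) a b c;
     d3 (d1 f) a b c, d3 (d2 f) a b c, d3 (d3 f) a b c]

/-- The Jacobian matrix of the coordinate change `(x,y,z) ↦ (x², y², z²)`. -/
noncomputable def J (x y z : ℝ) : Matrix (Fin 3) (Fin 3) ℝ :=
  !![2 * x, 0, 0; 0, 2 * y, 0; 0, 0, 2 * z]

theorem Hess_add_add (g h k : ℝ → ℝ) (a b c : ℝ) :
    Hess (fun a b c => g a + h b + k c) a b c =
      diagonal ![deriv (deriv g) a, deriv (deriv h) b, deriv (deriv k) c] := by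
  have h1 : d1 (fun a b c => g a + h b + k c) = fun a _ _ => deriv g a := by
    ext a b c
    simp only [d1, deriv_add_const]
  have h2 : d2 (fun a b c => g a + h b + k c) = fun _ b _ => deriv h b := by
    ext a b c
    simp only [d2, deriv_add_const, deriv_const_add]
  have h3 : d3 (fun a b c => g a + h b + k c) = fun _ _ c => deriv k c := by
    ext a b c
    simp only [d3, deriv_const_add]
  rw [Hess, h1, h2, h3]
  simp only [d1, d2, d3, deriv_const, diagonal_vec3]

theorem deriv_deriv_mul_log_div (r x : ℝ) :
    deriv (deriv fun t => t * log t / r) x = 1 / (r * x) := by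
  have h : deriv (fun t => t * log t / r) = fun t => deriv (fun t => t * log t) t / r := by
    ext t
    exact deriv_div_const r
  have h2 : deriv (deriv fun t => t * log t) x = x⁻¹ := by
    simpa only [Function.iterate_succ_apply', Function.iterate_zero_apply] using
      deriv2_mul_log x
  rw [h, deriv_div_const, h2]
  ring

theorem ψ_eq_add_add : ψ = fun a b c => a * log a / 4 + b * log b / 4 + c * log c / 4 := by
  ext a b c
  rw [ψ]
  ring

-- This holds at `0` as well: `deriv (t log t)` is not differentiable there, so its `deriv` is
-- the junk value `0`, and `1 / 0 = 0`.
theorem Hess_ψ (a b c : ℝ) :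
    Hess ψ a b c = !![1 / (4 * a), 0, 0; 0, 1 / (4 * b), 0; 0, 0, 1 / (4 * c)] := by
  rw [ψ_eq_add_add, Hess_add_add]
  simp only [deriv_deriv_mul_log_div, diagonal_vec3]

theorem J_eq_diagonal (x y z : ℝ) : J x y z = diagonal ![2 * x, 2 * y, 2 * z] :=
  (diagonal_vec3 _ _ _).symm

theorem two_mul_mul_one_div_four_mul_sq_mul {x : ℝ} (hx : x ≠ 0) :
    2 * x * (1 / (4 * x ^ 2)) * (2 * x) = 1 := by
  field_simp
  ring

/-- For `ψ(η) = ¼(η₁ ln η₁ + η₂ ln η₂ + η₃ ln η₃)` on `(0,∞)³`, the matrix of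
second partial derivatives is `diag(1/(4η₁), 1/(4η₂), 1/(4η₃))`, and
`(x², y², z²)` are Hessian coordinates for Euclidean 3-space with Hessian
potential `ψ`: `Jᵀ · Hess ψ(x²,y²,z²) · J = I₃`. -/
theorem sw_I_hessian_coordinates :
    (∀ a b c : ℝ, 0 < a → 0 < b → 0 < c →
      Hess ψ a b c = !![1 / (4 * a), 0, 0; 0, 1 / (4 * b), 0; 0, 0, 1 / (4 * c)]) ∧
    ∀ x y z : ℝ, 0 < x → 0 < y → 0 < z →
      (J x y z)ᵀ * Hess ψ (x ^ 2) (y ^ 2) (z ^ 2) * J x y z = 1 := by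
  refine ⟨fun a b c _ _ _ => Hess_ψ a b c, fun x y z hx hy hz => ?_⟩
  rw [Hess_ψ, ← diagonal_vec3, J_eq_diagonal, diagonal_transpose, diagonal_mul_diagonal,
    diagonal_mul_diagonal, ← diagonal_one]
  congr 1
  ext i
  fin_cases i
  exacts [two_mul_mul_one_div_four_mul_sq_mul hx.ne', two_mul_mul_one_div_four_mul_sq_mul hy.ne',
    two_mul_mul_one_div_four_mul_sq_mul hz.ne']
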